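/- Let ω₀ ∈ L^∞(ℝ²) have compact support with ω₀ ≥ 0 almost everywhere and ∫_{ℝ²} ω₀ dy > 0, and set u = N*ω₀. For c ∈ ℝ such that the superlevel set {u > c} is bounded and contains the origin, define r_c = sup{r > 0 : B_r ⊆ {u > c}} and R_c = inf{r > 0 : {u > c} ⊆ B_r}, where B_r is the open disk of radius r centered at the origin. Then there exist constants C > 0 and δ₀ ∈ ℝ such that for every c < δ₀ one has that {u > c} is bounded and contains the origin and R_c ≤ r_c + C. -/

import Mathlib

open MeasureTheory Metric Set Filter

noncomputable section

/-- The plane `ℝ²`. -/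
abbrev E2 : Type := EuclideanSpace ℝ (Fin 2)

/-- The Newtonian potential `N(x) = (1/(2π)) log(1/|x|)` on `ℝ²`. -/
def NewtonianPotential (x : E2) : ℝ := (1 / (2 * Real.pi)) * Real.log (1 / ‖x‖)

/-- The convolution `(N * ω)(x) = ∫ N(x-y) ω(y) dy`. -/
def newtonConv (ω : E2 → ℝ) (x : E2) : ℝ := ∫ y, NewtonianPotential (x - y) * ω y

/-- The inner radius `r_c` of the superlevel set `{u > c}`. -/
def innerRadius (u : E2 → ℝ) (c : ℝ) : ℝ :=
  sSup {r : ℝ | 0 < r ∧ ball (0 : E2) r ⊆ {x | c < u x}}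

/-- The outer radius `R_c` of the superlevel set `{u > c}`. -/
def outerRadius (u : E2 → ℝ) (c : ℝ) : ℝ :=
  sInf {r : ℝ | 0 < r ∧ {x | c < u x} ⊆ ball (0 : E2) r}

lemma measurable_abs_log_norm : Measurable fun z : E2 => |Real.log ‖z‖| :=
  (Real.measurable_log.comp measurable_norm).abs

/-- `|log ‖z‖|` is integrable on any closed ball in the plane. -/
lemma integrableOn_abs_log_norm_closedBall (R : ℝ) :
    IntegrableOn (fun z : E2 => |Real.log ‖z‖|) (closedBall 0 R) := by
  have hmeas := measurable_abs_log_norm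
  refine IntegrableOn.mono_set (t := closedBall 0 (max R 1)) ?_
    (closedBall_subset_closedBall (le_max_left _ _))
  set R' := max R 1 with hR'def
  have hR1 : (1 : ℝ) ≤ R' := le_max_right _ _
  have hsub : closedBall (0:E2) R' ⊆ (closedBall (0:E2) R' \ ball 0 1) ∪ ball 0 1 := by
    intro z hz
    by_cases h : z ∈ ball (0:E2) 1
    · exact Or.inr h
    · exact Or.inl ⟨hz, h⟩
  refine IntegrableOn.mono_set (IntegrableOn.union ?_ ?_) hsub
  · -- away from the origin the function is bounded
    apply Measure.integrableOn_of_bounded (M := Real.log R')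
    · exact ((measure_mono diff_subset).trans_lt measure_closedBall_lt_top).ne
    · exact hmeas.aestronglyMeasurable
    · refine (ae_restrict_iff' (measurableSet_closedBall.diff measurableSet_ball)).2
        (Eventually.of_forall fun z hz => ?_)
      have h1 : (1:ℝ) ≤ ‖z‖ := by
        have := hz.2
        simp only [mem_ball, dist_zero_right, not_lt] at this
        exact this
      have h2 : ‖z‖ ≤ R' := by
        have := hz.1
        simpa [mem_closedBall, dist_zero_right] using this
      have hnn : 0 ≤ Real.log ‖z‖ := Real.log_nonneg h1
      rw [Real.norm_eq_abs, abs_abs, abs_of_nonneg hnn]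
      exact Real.log_le_log (lt_of_lt_of_le one_pos h1) h2
  · -- near the origin, use the layer-cake formula
    refine ⟨hmeas.aestronglyMeasurable, ?_⟩
    have hnonneg : (0 : E2 → ℝ) ≤ fun z : E2 => |Real.log ‖z‖| := fun z => abs_nonneg _
    rw [HasFiniteIntegral, lintegral_enorm_of_nonneg hnonneg]
    rw [lintegral_eq_lintegral_meas_lt _ (Eventually.of_forall hnonneg) hmeas.aemeasurable]
    have V := volume (ball (0:E2) 1)
    have hVlt : volume (ball (0:E2) 1) < ⊤ := measure_ball_lt_top
    have hb : ∀ t ∈ Ioi (0:ℝ),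
        (volume.restrict (ball (0:E2) 1)) {a : E2 | t < |Real.log ‖a‖|}
          ≤ ENNReal.ofReal (Real.exp (-t) ^ 2) * volume (ball (0:E2) 1) := by
      intro t ht
      have htpos : 0 < t := ht
      have hAmeas : MeasurableSet {a : E2 | t < |Real.log ‖a‖|} :=
        measurableSet_lt measurable_const measurable_abs_log_norm
      rw [Measure.restrict_apply hAmeas]
      have hss : {a : E2 | t < |Real.log ‖a‖|} ∩ ball (0:E2) 1 ⊆ ball (0:E2) (Real.exp (-t)) := by
        rintro a ⟨ha1, ha2⟩
        have hn1 : ‖a‖ < 1 := mem_ball_zero_iff.1 ha2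
        rw [mem_ball_zero_iff]
        rcases eq_or_lt_of_le (norm_nonneg a) with h0 | h0
        · rw [← h0]; exact Real.exp_pos _
        · have hlogneg : Real.log ‖a‖ < 0 := Real.log_neg h0 hn1
          have ha1' : t < |Real.log ‖a‖| := ha1
          rw [abs_of_neg hlogneg] at ha1'
          have : Real.log ‖a‖ < -t := by linarith
          calc ‖a‖ = Real.exp (Real.log ‖a‖) := (Real.exp_log h0).symm
            _ < Real.exp (-t) := Real.exp_lt_exp.2 this
      calc volume ({a : E2 | t < |Real.log ‖a‖|} ∩ ball (0:E2) 1)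
          ≤ volume (ball (0:E2) (Real.exp (-t))) := measure_mono hss
        _ = ENNReal.ofReal (Real.exp (-t) ^ Module.finrank ℝ E2) * volume (ball (0:E2) 1) :=
            Measure.addHaar_ball _ _ (Real.exp_pos _).le
        _ = ENNReal.ofReal (Real.exp (-t) ^ 2) * volume (ball (0:E2) 1) := by
            have h2 : Module.finrank ℝ E2 = 2 := by simp
            rw [h2]
    have hmble : Measurable fun t : ℝ => ENNReal.ofReal (Real.exp (-t) ^ 2) :=
      (ENNReal.measurable_ofReal.comp ((Real.measurable_exp.comp measurable_neg).pow_const 2))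
    calc ∫⁻ t in Ioi (0:ℝ), (volume.restrict (ball (0:E2) 1)) {a : E2 | t < |Real.log ‖a‖|}
        ≤ ∫⁻ t in Ioi (0:ℝ),
            ENNReal.ofReal (Real.exp (-t) ^ 2) * volume (ball (0:E2) 1) :=
          setLIntegral_mono' measurableSet_Ioi hb
      _ = (∫⁻ t in Ioi (0:ℝ), ENNReal.ofReal (Real.exp (-t) ^ 2)) * volume (ball (0:E2) 1) :=
          lintegral_mul_const _ hmble
      _ < ⊤ := by
          apply ENNReal.mul_lt_top _ hVlt
          have hint : IntegrableOn (fun t : ℝ => Real.exp (-t) ^ 2) (Ioi 0) := by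
            have heq : (fun t : ℝ => Real.exp (-t) ^ 2) = fun t : ℝ => Real.exp (-2 * t) := by
              funext t
              rw [sq, ← Real.exp_add]
              ring_nf
            rw [heq]
            exact exp_neg_integrableOn_Ioi 0 two_pos
          exact hint.lintegral_lt_top

/-- For `ω₀ ≥ 0` with positive integral (the case `Ω = 0`), the far-out superlevel sets
of `u = N*ω₀` are bounded neighborhoods of the origin with `R_c ≤ r_c + C` for a
uniform constant `C`. -/
theorem far_superlevel_sets_are_almost_round_annuli
    (ω₀ : E2 → ℝ) (M : ℝ) (hmeas : Measurable ω₀) (hbound : ∀ x, |ω₀ x| ≤ M)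
    (hsupp : HasCompactSupport ω₀)
    (hnonneg : ∀ᵐ x ∂(volume : Measure E2), 0 ≤ ω₀ x)
    (hpos : 0 < ∫ y, ω₀ y)
    (u : E2 → ℝ) (hu : u = newtonConv ω₀) :
    ∃ C > (0 : ℝ), ∃ δ₀ : ℝ, ∀ c < δ₀,
      Bornology.IsBounded {x | c < u x} ∧ c < u 0 ∧
      outerRadius u c ≤ innerRadius u c + C := by
  classical
  -- basic constants
  obtain ⟨r0, hr0⟩ := hsupp.isBounded.subset_closedBall (0 : E2)
  set ρ : ℝ := max r0 1 with hρdef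
  have hρ1 : (1:ℝ) ≤ ρ := le_max_right _ _
  have hρ0 : (0:ℝ) < ρ := lt_of_lt_of_le one_pos hρ1
  have hρsupp : tsupport ω₀ ⊆ closedBall (0:E2) ρ :=
    hr0.trans (closedBall_subset_closedBall (le_max_left _ _))
  set m : ℝ := ∫ y, ω₀ y with hmdef
  have hm : 0 < m := hpos
  have hM : 0 ≤ M := (abs_nonneg _).trans (hbound 0)
  have hπ : (0:ℝ) < Real.pi := Real.pi_pos
  have h2π : (0:ℝ) < 2 * Real.pi := by linarith
  -- ω₀ is integrable
  have hωint : Integrable ω₀ := by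
    rw [← integrableOn_iff_integrable_of_support_subset
      ((subset_tsupport ω₀).trans hρsupp)]
    apply Measure.integrableOn_of_bounded (M := M) measure_closedBall_lt_top.ne
      hmeas.aestronglyMeasurable
    exact Eventually.of_forall fun y => by rw [Real.norm_eq_abs]; exact hbound y
  -- the kernel is integrable for every x
  have hker : ∀ x : E2, Integrable fun y => NewtonianPotential (x - y) * ω₀ y := by
    intro x
    set F : E2 → ℝ := (closedBall (0:E2) (‖x‖ + ρ)).indicator (fun z => |Real.log ‖z‖|) with hFdef
    have hFnonneg : ∀ z, 0 ≤ F z := fun z =>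
      Set.indicator_nonneg (fun z' _ => abs_nonneg _) z
    have hFint : Integrable F :=
      (integrableOn_abs_log_norm_closedBall _).integrable_indicator measurableSet_closedBall
    have hcomp : Integrable fun y : E2 => F (x - y) := by
      have h1 := Measure.measurePreserving_sub_left (volume : Measure E2) x
      have h2 : MeasurableEmbedding (fun y : E2 => x - y) :=
        (Homeomorph.subLeft x).measurableEmbedding
      exact (h1.integrable_comp_emb h2).2 hFint
    have hNmeas : Measurable (NewtonianPotential) := by
      unfold NewtonianPotential
      exact measurable_const.mul (Real.measurable_log.comp
        (measurable_const.div measurable_norm))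
    apply Integrable.mono' ((hcomp.const_mul (M * (1/(2*Real.pi)))))
    · exact ((hNmeas.comp (measurable_const.sub measurable_id)).mul hmeas).aestronglyMeasurable
    · refine Eventually.of_forall fun y => ?_
      by_cases hy : y ∈ tsupport ω₀
      · have hyn : ‖y‖ ≤ ρ := by
          have := hρsupp hy
          simpa [mem_closedBall, dist_zero_right] using this
        have hmem : x - y ∈ closedBall (0:E2) (‖x‖ + ρ) := by
          rw [mem_closedBall_zero_iff]
          exact (norm_sub_le x y).trans (by linarith)
        have hF : F (x - y) = |Real.log ‖x - y‖| := Set.indicator_of_mem hmem _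
        rw [Real.norm_eq_abs, abs_mul, hF]
        have hN : |NewtonianPotential (x - y)| = (1/(2*Real.pi)) * |Real.log ‖x - y‖| := by
          unfold NewtonianPotential
          rw [abs_mul, one_div ‖x - y‖, Real.log_inv, abs_neg,
            abs_of_nonneg (by positivity : (0:ℝ) ≤ 1 / (2 * Real.pi))]
        rw [hN]
        have := hbound y
        calc 1/(2*Real.pi) * |Real.log ‖x - y‖| * |ω₀ y|
            ≤ 1/(2*Real.pi) * |Real.log ‖x - y‖| * M := by
              apply mul_le_mul_of_nonneg_left this (by positivity)
          _ = M * (1/(2*Real.pi)) * |Real.log ‖x - y‖| := by ring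
      · have hy0 : ω₀ y = 0 := image_eq_zero_of_notMem_tsupport hy
        rw [hy0, mul_zero, norm_zero]
        have := hFnonneg (x - y)
        positivity
  -- pointwise log comparison
  have logle : ∀ a b : ℝ, 0 ≤ a → 1 ≤ b → a ≤ b → Real.log a ≤ Real.log b := by
    intro a b ha hb hab
    rcases eq_or_lt_of_le ha with h | h
    · rw [← h, Real.log_zero]; exact Real.log_nonneg hb
    · exact Real.log_le_log h hab
  -- the lower bound  u x ≥ (1/(2π)) (−log(‖x‖+ρ)) m
  have hlow : ∀ x : E2, (1/(2*Real.pi)) * (- Real.log (‖x‖ + ρ)) * m ≤ u x := by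
    intro x
    rw [hu]
    unfold newtonConv
    have hle : ∀ᵐ y ∂(volume : Measure E2),
        (1/(2*Real.pi)) * (- Real.log (‖x‖ + ρ)) * ω₀ y
          ≤ NewtonianPotential (x - y) * ω₀ y := by
      filter_upwards [hnonneg] with y hy
      by_cases hys : y ∈ tsupport ω₀
      · have hyn : ‖y‖ ≤ ρ := by
          have := hρsupp hys
          simpa [mem_closedBall, dist_zero_right] using this
        have hlog : Real.log ‖x - y‖ ≤ Real.log (‖x‖ + ρ) := by
          apply logle _ _ (norm_nonneg _) (by linarith [norm_nonneg x])
          exact (norm_sub_le x y).trans (by linarith)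
        unfold NewtonianPotential
        rw [one_div ‖x - y‖, Real.log_inv]
        apply mul_le_mul_of_nonneg_right _ hy
        apply mul_le_mul_of_nonneg_left _ (by positivity)
        linarith
      · rw [image_eq_zero_of_notMem_tsupport hys, mul_zero, mul_zero]
    have := integral_mono_ae (hωint.const_mul _) (hker x) hle
    calc (1/(2*Real.pi)) * (- Real.log (‖x‖ + ρ)) * m
        = ∫ y, (1/(2*Real.pi)) * (- Real.log (‖x‖ + ρ)) * ω₀ y := by
          rw [integral_const_mul]
      _ ≤ ∫ y, NewtonianPotential (x - y) * ω₀ y := this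
  -- the upper bound for ‖x‖ ≥ ρ + 1
  have hupp : ∀ x : E2, ρ + 1 ≤ ‖x‖ →
      u x ≤ (1/(2*Real.pi)) * (- Real.log (‖x‖ - ρ)) * m := by
    intro x hx
    rw [hu]
    unfold newtonConv
    have hle : ∀ᵐ y ∂(volume : Measure E2),
        NewtonianPotential (x - y) * ω₀ y
          ≤ (1/(2*Real.pi)) * (- Real.log (‖x‖ - ρ)) * ω₀ y := by
      filter_upwards [hnonneg] with y hy
      by_cases hys : y ∈ tsupport ω₀
      · have hyn : ‖y‖ ≤ ρ := by
          have := hρsupp hys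
          simpa [mem_closedBall, dist_zero_right] using this
        have hd : ‖x‖ - ρ ≤ ‖x - y‖ := by
          have := norm_sub_norm_le x y
          linarith
        have hlog : Real.log (‖x‖ - ρ) ≤ Real.log ‖x - y‖ :=
          Real.log_le_log (by linarith) hd
        unfold NewtonianPotential
        rw [one_div ‖x - y‖, Real.log_inv]
        apply mul_le_mul_of_nonneg_right _ hy
        apply mul_le_mul_of_nonneg_left _ (by positivity)
        linarith
      · rw [image_eq_zero_of_notMem_tsupport hys, mul_zero, mul_zero]
    have := integral_mono_ae (hker x) (hωint.const_mul _) hle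
    calc ∫ y, NewtonianPotential (x - y) * ω₀ y
        ≤ ∫ y, (1/(2*Real.pi)) * (- Real.log (‖x‖ - ρ)) * ω₀ y := this
      _ = (1/(2*Real.pi)) * (- Real.log (‖x‖ - ρ)) * m := by
          rw [integral_const_mul]
  -- choose the constants
  refine ⟨2 * ρ, by linarith, (1/(2*Real.pi)) * (- Real.log (ρ + 1)) * m, fun c hc => ?_⟩
  set s : ℝ := Real.exp (-(c * (2*Real.pi)) / m) with hsdef
  have hspos : 0 < s := Real.exp_pos _
  have hLs : (1/(2*Real.pi)) * (- Real.log s) * m = c := by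
    rw [hsdef, Real.log_exp]
    field_simp
  have hρs : ρ + 1 < s := by
    have h1 : Real.log (ρ + 1) < Real.log s := by
      rw [hsdef, Real.log_exp]
      rw [lt_div_iff₀ hm]
      have key := mul_lt_mul_of_pos_right hc h2π
      have heq : 1 / (2 * Real.pi) * -Real.log (ρ + 1) * m * (2 * Real.pi)
          = -(Real.log (ρ + 1) * m) := by
        field_simp
      rw [heq] at key
      linarith
    calc ρ + 1 = Real.exp (Real.log (ρ + 1)) := (Real.exp_log (by linarith)).symm
      _ < Real.exp (Real.log s) := Real.exp_lt_exp.2 h1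
      _ = s := Real.exp_log hspos
  -- outer containment
  have hsup : {x : E2 | c < u x} ⊆ ball 0 (s + ρ) := by
    intro x hx
    by_contra hxb
    have hxn : s + ρ ≤ ‖x‖ := by
      rw [mem_ball_zero_iff, not_lt] at hxb
      exact hxb
    have h1 : ρ + 1 ≤ ‖x‖ := by linarith
    have h2 := hupp x h1
    have hlog : Real.log s ≤ Real.log (‖x‖ - ρ) :=
      Real.log_le_log hspos (by linarith)
    have h3 : (1/(2*Real.pi)) * (- Real.log (‖x‖ - ρ)) * m
        ≤ (1/(2*Real.pi)) * (- Real.log s) * m := by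
      apply mul_le_mul_of_nonneg_right _ hm.le
      apply mul_le_mul_of_nonneg_left _ (by positivity)
      linarith
    have hxc : c < u x := hx
    linarith [hLs]
  -- inner containment
  have hin : ball (0:E2) (s - ρ) ⊆ {x : E2 | c < u x} := by
    intro x hx
    have hxn : ‖x‖ < s - ρ := mem_ball_zero_iff.1 hx
    have h1 := hlow x
    have hlog : Real.log (‖x‖ + ρ) < Real.log s :=
      Real.log_lt_log (by positivity) (by linarith)
    have h2 : (1/(2*Real.pi)) * (- Real.log s) * m
        < (1/(2*Real.pi)) * (- Real.log (‖x‖ + ρ)) * m := by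
      apply mul_lt_mul_of_pos_right _ hm
      apply mul_lt_mul_of_pos_left _ (by positivity)
      linarith
    show c < u x
    linarith [hLs]
  have hbdd : Bornology.IsBounded {x : E2 | c < u x} := isBounded_ball.subset hsup
  have hsρ1 : (1:ℝ) < s - ρ := by linarith
  have h0mem : c < u 0 := hin (by rw [mem_ball_zero_iff, norm_zero]; linarith)
  refine ⟨hbdd, h0mem, ?_⟩
  -- bound on the outer radius
  have houter : outerRadius u c ≤ s + ρ := by
    apply csInf_le ⟨0, fun r hr => hr.1.le⟩
    exact ⟨by linarith, hsup⟩
  -- bound on the inner radius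
  have hBddAbove : BddAbove {r : ℝ | 0 < r ∧ ball (0 : E2) r ⊆ {x | c < u x}} := by
    refine ⟨s + ρ, fun r hr => ?_⟩
    by_contra h
    push_neg at h
    set t : ℝ := (s + ρ + r) / 2 with htdef
    have ht1 : s + ρ < t := by rw [htdef]; linarith
    have ht2 : t < r := by rw [htdef]; linarith
    have htpos : 0 ≤ t := by linarith
    set w : E2 := EuclideanSpace.single (0 : Fin 2) t with hwdef
    have hwn : ‖w‖ = t := by
      rw [hwdef, EuclideanSpace.norm_single, Real.norm_eq_abs, abs_of_nonneg htpos]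
    have hwmem : w ∈ ball (0:E2) r := by rw [mem_ball_zero_iff, hwn]; exact ht2
    have := hsup (hr.2 hwmem)
    rw [mem_ball_zero_iff, hwn] at this
    linarith
  have hinner : s - ρ ≤ innerRadius u c :=
    le_csSup hBddAbove ⟨by linarith, hin⟩
  linarith
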